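/- Let G₁ and G₂ be Γ-labeled graphs with |V(G₁) ∩ V(G₂)| ≥ 2. If G₁ is periodically rigid (r₂(E₁) = 2|V₁| − 2) and G₂ is rigid and balanced (r₂(E₂) = 2|V₂| − 3), then G₁ ∪ G₂ is periodically rigid: r₂(E₁ ∪ E₂) = 2|V₁ ∪ V₂| − 2. -/

import Mathlib

/-!
Let `F₁`, `F₂` be maximum independent subsets of `E₁`, `E₂`; they span `V(E₁)`, `V(E₂)`, and
`F₁` is `(2,2)`-tight. Extend `F₁` to a maximal independent `F ⊆ F₁ ∪ F₂` and let `T ⊇ F₁` be a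
maximal `(2,2)`-tight subset of `F`. An edge of `F₂` that cannot be added to `F` is spanned by a
critical subset `W` of `F`; `W` cannot lie inside the balanced independent set `F₂`, so it meets
`T`, and by submodularity of the counts `T ∪ W` is again `(2,2)`-tight, so `W ⊆ T`. Hence the
edges of `F₂` outside `F \ T` form a balanced independent set on `V(T) ∩ V(E₂)`, which has at
least two vertices, so
`|F| = |T| + |F \ T| ≥ 2|V(T)| − 2 + 2|V(E₂)| − 2|V(T) ∩ V(E₂)| ≥ 2|V(E₁ ∪ E₂)| − 2`.
-/

open Finset

/-- The set of vertices incident to an edge set `F`. -/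
def labVerts {V ε : Type*} [DecidableEq V] [DecidableEq ε]
    (head tail : ε → V) (F : Finset ε) : Finset V :=
  F.image head ∪ F.image tail

/-- An edge set `F` of a `Γ`-labeled graph is balanced if the label of every closed walk
in `F` is the identity; equivalently, the labels on `F` come from a potential `θ`. -/
def IsBalanced {V ε Γ : Type*} [AddCommGroup Γ]
    (head tail : ε → V) (ψ : ε → Γ) (F : Finset ε) : Prop :=
  ∃ θ : V → Γ, ∀ e ∈ F, ψ e = θ (head e) - θ (tail e)

/-- Independence in the periodic count matroid `R₂(V,Γ)`:
every nonempty subset `F'` satisfies `|F'| ≤ 2|V(F')| − 2`, and every nonempty balanced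
subset `F'` satisfies `|F'| ≤ 2|V(F')| − 3`. -/
def CountIndep {V ε Γ : Type*} [DecidableEq V] [DecidableEq ε] [AddCommGroup Γ]
    (head tail : ε → V) (ψ : ε → Γ) (F : Finset ε) : Prop :=
  (∀ F' ⊆ F, F'.Nonempty → F'.card ≤ 2 * (labVerts head tail F').card - 2) ∧
  (∀ F' ⊆ F, F'.Nonempty → IsBalanced head tail ψ F' →
    F'.card ≤ 2 * (labVerts head tail F').card - 3)

/-- The rank function `r₂` of the periodic count matroid: the maximum cardinality of an
independent subset of `E`. -/
noncomputable def rank2 {V ε Γ : Type*} [DecidableEq V] [DecidableEq ε] [AddCommGroup Γ]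
    (head tail : ε → V) (ψ : ε → Γ) (E : Finset ε) : ℕ := by
  classical
  exact (E.powerset.filter (CountIndep head tail ψ)).sup Finset.card

theorem Finset.exists_le_maximal_subset {α : Type*} {p : Finset α → Prop} {I S : Finset α}
    (hIS : I ⊆ S) (hI : p I) : ∃ F, I ⊆ F ∧ Maximal (fun G => G ⊆ S ∧ p G) F := by
  classical
  obtain ⟨F, hIF, hF⟩ := (S.powerset.filter p).exists_le_maximal
    (mem_filter.2 ⟨mem_powerset.2 hIS, hI⟩)
  simp only [mem_filter, mem_powerset] at hF
  exact ⟨F, hIF, hF⟩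

theorem IsBalanced.mono {V ε Γ : Type*} [AddCommGroup Γ] {head tail : ε → V} {ψ : ε → Γ}
    {F G : Finset ε} (h : IsBalanced head tail ψ F) (hGF : G ⊆ F) : IsBalanced head tail ψ G :=
  let ⟨θ, hθ⟩ := h
  ⟨θ, fun e he => hθ e (hGF he)⟩

section CountMatroid

variable {V ε Γ : Type*} [DecidableEq V] [DecidableEq ε] [AddCommGroup Γ]
  {head tail : ε → V} {ψ : ε → Γ}

theorem mem_labVerts {F : Finset ε} {x : V} :
    x ∈ labVerts head tail F ↔ ∃ e ∈ F, head e = x ∨ tail e = x := by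
  simp only [labVerts, mem_union, mem_image]
  grind

theorem head_mem_labVerts {F : Finset ε} {e : ε} (he : e ∈ F) : head e ∈ labVerts head tail F :=
  mem_labVerts.2 ⟨e, he, .inl rfl⟩

theorem tail_mem_labVerts {F : Finset ε} {e : ε} (he : e ∈ F) : tail e ∈ labVerts head tail F :=
  mem_labVerts.2 ⟨e, he, .inr rfl⟩

theorem labVerts_mono {F G : Finset ε} (h : F ⊆ G) :
    labVerts head tail F ⊆ labVerts head tail G :=
  union_subset_union (image_subset_image h) (image_subset_image h)

theorem labVerts_union (F G : Finset ε) :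
    labVerts head tail (F ∪ G) = labVerts head tail F ∪ labVerts head tail G := by
  ext x
  simp only [mem_union, mem_labVerts]
  grind

theorem labVerts_singleton (e : ε) : labVerts head tail {e} = {head e, tail e} := by
  rw [labVerts, image_singleton, image_singleton, insert_eq]

theorem labVerts_insert_of_mem {W : Finset ε} {e : ε} (hh : head e ∈ labVerts head tail W)
    (ht : tail e ∈ labVerts head tail W) :
    labVerts head tail (insert e W) = labVerts head tail W := by
  rw [insert_eq, labVerts_union, labVerts_singleton, union_eq_right]
  exact insert_subset hh (singleton_subset_iff.2 ht)

theorem countIndep_empty : CountIndep head tail ψ (∅ : Finset ε) := by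
  constructor <;> intro F' hF' hne <;> simp [subset_empty.1 hF'] at hne

theorem CountIndep.head_ne_tail {F : Finset ε} (hF : CountIndep head tail ψ F) {e : ε}
    (he : e ∈ F) : head e ≠ tail e := by
  intro heq
  have h := hF.1 {e} (singleton_subset_iff.2 he) (singleton_nonempty e)
  simp [labVerts_singleton, heq] at h

theorem CountIndep.card_le_rank2 {E F : Finset ε} (hF : CountIndep head tail ψ F) (hFE : F ⊆ E) :
    F.card ≤ rank2 head tail ψ E := by
  classical
  exact le_sup (f := card) (mem_filter.2 ⟨mem_powerset.2 hFE, hF⟩)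

theorem exists_countIndep_card_eq_rank2 (E : Finset ε) :
    ∃ F ⊆ E, CountIndep head tail ψ F ∧ F.card = rank2 head tail ψ E := by
  classical
  obtain ⟨F, hF, heq⟩ := exists_mem_eq_sup (E.powerset.filter (CountIndep head tail ψ))
    ⟨∅, mem_filter.2 ⟨empty_mem_powerset E, countIndep_empty⟩⟩ card
  rw [mem_filter, mem_powerset] at hF
  exact ⟨F, hF.1, hF.2, heq.symm⟩

theorem rank2_le (E : Finset ε) :
    rank2 head tail ψ E ≤ 2 * (labVerts head tail E).card - 2 := by
  classical
  refine Finset.sup_le fun F hF => ?_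
  rw [mem_filter, mem_powerset] at hF
  rcases F.eq_empty_or_nonempty with rfl | hne
  · simp
  · have hcount := hF.2.1 F subset_rfl hne
    have hV := card_le_card (labVerts_mono (head := head) (tail := tail) hF.1)
    omega

theorem exists_countIndep_spanning_of_rank2_eq {E : Finset ε} {c : ℕ} (hc : c ≤ 3)
    (hE : 2 ≤ (labVerts head tail E).card)
    (hr : rank2 head tail ψ E = 2 * (labVerts head tail E).card - c) :
    ∃ F ⊆ E, CountIndep head tail ψ F ∧ labVerts head tail F = labVerts head tail E ∧
      F.card + c = 2 * (labVerts head tail F).card := by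
  obtain ⟨F, hFE, hF, hFr⟩ :=
    exists_countIndep_card_eq_rank2 (head := head) (tail := tail) (ψ := ψ) E
  have hne : F.Nonempty := card_pos.1 (by omega)
  have hcount := hF.1 F subset_rfl hne
  have hspan : labVerts head tail F = labVerts head tail E :=
    eq_of_subset_of_card_le (labVerts_mono hFE) (by omega)
  exact ⟨F, hFE, hF, hspan, by rw [hspan]; omega⟩

def IsTight (head tail : ε → V) (T : Finset ε) : Prop :=
  T.card + 2 = 2 * (labVerts head tail T).card

def IsCritical (head tail : ε → V) (ψ : ε → Γ) (W : Finset ε) : Prop :=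
  IsTight head tail W ∨ (IsBalanced head tail ψ W ∧ W.card + 3 = 2 * (labVerts head tail W).card)

theorem CountIndep.isTight_union {F T W : Finset ε} (hF : CountIndep head tail ψ F)
    (hTF : T ⊆ F) (hWF : W ⊆ F) (hT : IsTight head tail T) (hW : IsCritical head tail ψ W)
    (hTW : (T ∩ W).Nonempty) : IsTight head tail (T ∪ W) := by
  have hIF : T ∩ W ⊆ F := inter_subset_left.trans hTF
  have hU := hF.1 (T ∪ W) (union_subset hTF hWF) (hTW.mono inter_subset_union)
  have hVI := card_le_card (subset_inter (labVerts_mono (head := head) (tail := tail)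
    (inter_subset_left (s₁ := T) (s₂ := W))) (labVerts_mono inter_subset_right))
  have hVU := card_union_add_card_inter (labVerts head tail T) (labVerts head tail W)
  have hEU := card_union_add_card_inter T W
  have hI₀ := hTW.card_pos
  have hVIW := card_le_card
    (inter_subset_right (s₁ := labVerts head tail T) (s₂ := labVerts head tail W))
  unfold IsTight at hT ⊢
  rw [labVerts_union] at hU ⊢
  rcases hW with hW | ⟨hbal, hW⟩
  · have hI := hF.1 _ hIF hTW
    unfold IsTight at hW
    omega
  · have hI := hF.2 _ hIF hTW (hbal.mono inter_subset_right)
    omega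

theorem card_add_eq_of_count_lt_insert {W : Finset ε} {e : ε} {c : ℕ} (hc₂ : 2 ≤ c) (hc₃ : c ≤ 3)
    (he : head e ≠ tail e) (hW : W.Nonempty → W.card ≤ 2 * (labVerts head tail W).card - c)
    (hlt : 2 * (labVerts head tail (insert e W)).card - c < (insert e W).card) :
    W.card + c = 2 * (labVerts head tail W).card ∧
      head e ∈ labVerts head tail W ∧ tail e ∈ labVerts head tail W := by
  rcases W.eq_empty_or_nonempty with rfl | hne
  · simp only [insert_empty, labVerts_singleton, card_pair he, card_singleton] at hlt
    omega
  have hWc := hW hne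
  have hpos := card_pos.2 hne
  have hins := card_insert_le e W
  have hsub := labVerts_mono (head := head) (tail := tail) (subset_insert e W)
  have hspan := eq_of_subset_of_card_le hsub (by have hV := card_le_card hsub; omega)
  rw [← hspan] at hlt
  exact ⟨by omega, hspan ▸ head_mem_labVerts (mem_insert_self e W),
    hspan ▸ tail_mem_labVerts (mem_insert_self e W)⟩

theorem CountIndep.exists_isCritical_of_not_countIndep_insert {F : Finset ε} {e : ε}
    (hF : CountIndep head tail ψ F) (he : head e ≠ tail e)
    (hins : ¬CountIndep head tail ψ (insert e F)) :
    ∃ W ⊆ F, IsCritical head tail ψ W ∧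
      head e ∈ labVerts head tail W ∧ tail e ∈ labVerts head tail W := by
  have hmem : ∀ F' ⊆ insert e F, ¬F' ⊆ F → e ∈ F' := fun F' hF' hF'F =>
    by_contra fun h => hF'F ((subset_insert_iff_of_notMem h).1 hF')
  simp only [CountIndep, not_and_or, not_forall, not_le] at hins
  rcases hins with ⟨F', hF', hne, hlt⟩ | ⟨F', hF', hne, hbal, hlt⟩
  · have heF' : e ∈ F' := hmem F' hF' fun h => (hF.1 F' h hne).not_gt hlt
    rw [← insert_erase heF'] at hlt
    obtain ⟨hc, hh, ht⟩ := card_add_eq_of_count_lt_insert le_rfl (by norm_num) he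
      (hF.1 _ (subset_insert_iff.1 hF')) hlt
    exact ⟨F'.erase e, subset_insert_iff.1 hF', .inl hc, hh, ht⟩
  · have heF' : e ∈ F' := hmem F' hF' fun h => (hF.2 F' h hne hbal).not_gt hlt
    have hbal' := hbal.mono (erase_subset e F')
    rw [← insert_erase heF'] at hlt
    obtain ⟨hc, hh, ht⟩ := card_add_eq_of_count_lt_insert (by norm_num) le_rfl he
      (fun hne' => hF.2 _ (subset_insert_iff.1 hF') hne' hbal') hlt
    exact ⟨F'.erase e, subset_insert_iff.1 hF', .inr ⟨hbal', hc⟩, hh, ht⟩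

theorem CountIndep.not_isCritical_of_spans {F W : Finset ε} {e : ε}
    (hF : CountIndep head tail ψ F) (hbal : IsBalanced head tail ψ F) (he : e ∈ F)
    (hWF : W ⊆ F) (heW : e ∉ W) (hh : head e ∈ labVerts head tail W)
    (ht : tail e ∈ labVerts head tail W) : ¬IsCritical head tail ψ W := by
  have hsub : insert e W ⊆ F := insert_subset he hWF
  have hcount := hF.2 _ hsub (insert_nonempty e W) (hbal.mono hsub)
  rw [labVerts_insert_of_mem hh ht, card_insert_of_notMem heW] at hcount
  rintro (hW | ⟨-, hW⟩) <;> unfold IsTight at * <;> omega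

theorem endpoints_mem_labVerts_of_maximal {F F₂ T : Finset ε} {e : ε}
    (hF : CountIndep head tail ψ F) (hT : Maximal (fun G => G ⊆ F ∧ IsTight head tail G) T)
    (hF₂ : CountIndep head tail ψ F₂) (hbal : IsBalanced head tail ψ F₂) (hFT : F ⊆ T ∪ F₂)
    (he : e ∈ F₂) (heF : e ∉ F) (hins : ¬CountIndep head tail ψ (insert e F)) :
    head e ∈ labVerts head tail T ∧ tail e ∈ labVerts head tail T := by
  obtain ⟨W, hWF, hW, hh, ht⟩ :=
    hF.exists_isCritical_of_not_countIndep_insert (hF₂.head_ne_tail he) hins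
  have hTW : (T ∩ W).Nonempty := by
    rw [← not_disjoint_iff_nonempty_inter]
    intro hdisj
    have hWF₂ : W ⊆ F₂ := hdisj.symm.left_le_of_le_sup_left (hWF.trans hFT)
    exact hF₂.not_isCritical_of_spans hbal he hWF₂ (fun h => heF (hWF h)) hh ht hW
  have hWT : W ⊆ T := subset_union_right.trans <|
    hT.2 ⟨union_subset hT.1.1 hWF, hF.isTight_union hT.1.1 hWF hT.1.2 hW hTW⟩ subset_union_left
  exact ⟨labVerts_mono hWT hh, labVerts_mono hWT ht⟩

theorem two_mul_card_labVerts_union_le {F F₂ T : Finset ε}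
    (hT : IsTight head tail T) (hTF : T ⊆ F) (hFT : F ⊆ T ∪ F₂)
    (hF₂ : CountIndep head tail ψ F₂) (hbal : IsBalanced head tail ψ F₂)
    (hF₂c : F₂.card + 3 = 2 * (labVerts head tail F₂).card)
    (hshare : 2 ≤ (labVerts head tail T ∩ labVerts head tail F₂).card)
    (hends : ∀ e ∈ F₂, e ∉ F → head e ∈ labVerts head tail T ∧ tail e ∈ labVerts head tail T) :
    2 * (labVerts head tail T ∪ labVerts head tail F₂).card ≤ F.card + 2 := by
  have hKF₂ : F \ T ⊆ F₂ := sdiff_le_iff.2 hFT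
  have hspan :
      labVerts head tail (F₂ \ (F \ T)) ⊆ labVerts head tail T ∩ labVerts head tail F₂ := by
    intro x hx
    obtain ⟨e, he, hx⟩ := mem_labVerts.1 hx
    rw [mem_sdiff] at he
    refine mem_inter.2 ⟨?_, mem_labVerts.2 ⟨e, he.1, hx⟩⟩
    by_cases heF : e ∈ F
    · have heT : e ∈ T := by_contra fun h => he.2 (mem_sdiff.2 ⟨heF, h⟩)
      exact mem_labVerts.2 ⟨e, heT, hx⟩
    · obtain ⟨hh, ht⟩ := hends e he.1 heF
      rcases hx with rfl | rfl
      exacts [hh, ht]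
  have hrest :
      (F₂ \ (F \ T)).card + 3 ≤ 2 * (labVerts head tail T ∩ labVerts head tail F₂).card := by
    rcases (F₂ \ (F \ T)).eq_empty_or_nonempty with h | hne
    · rw [h, card_empty]
      omega
    · have hcount := hF₂.2 _ sdiff_subset hne (hbal.mono sdiff_subset)
      have hV := card_le_card hspan
      have hpos := card_pos.2 hne
      omega
  have hsplitF₂ := card_sdiff_add_card_eq_card hKF₂
  have hsplitF := card_sdiff_add_card_eq_card hTF
  have hVU := card_union_add_card_inter (labVerts head tail T) (labVerts head tail F₂)
  unfold IsTight at hT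
  omega

end CountMatroid

/-- Lemma cl:G_1cupG_2rigid2 (i). If `G₁` is periodically rigid, `G₂`
is rigid and balanced, and they share at least two vertices, then `G₁ ∪ G₂` is
periodically rigid: `r₂(E₁ ∪ E₂) = 2|V₁ ∪ V₂| − 2`. -/
theorem union_periodically_rigid_of_rigid
    {V ε Γ : Type*} [DecidableEq V] [DecidableEq ε] [AddCommGroup Γ]
    (head tail : ε → V) (ψ : ε → Γ) (E₁ E₂ : Finset ε)
    (hbal2 : IsBalanced head tail ψ E₂)
    (hshare : 2 ≤ (labVerts head tail E₁ ∩ labVerts head tail E₂).card)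
    (hr1 : rank2 head tail ψ E₁ = 2 * (labVerts head tail E₁).card - 2)
    (hr2 : rank2 head tail ψ E₂ = 2 * (labVerts head tail E₂).card - 3) :
    rank2 head tail ψ (E₁ ∪ E₂) = 2 * (labVerts head tail (E₁ ∪ E₂)).card - 2 := by
  obtain ⟨F₁, hF₁E, hF₁, hV₁, hF₁c⟩ := exists_countIndep_spanning_of_rank2_eq (by norm_num)
    (hshare.trans (card_le_card inter_subset_left)) hr1
  obtain ⟨F₂, hF₂E, hF₂, hV₂, hF₂c⟩ := exists_countIndep_spanning_of_rank2_eq le_rfl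
    (hshare.trans (card_le_card inter_subset_right)) hr2
  have hbal : IsBalanced head tail ψ F₂ := hbal2.mono hF₂E
  obtain ⟨F, hF₁F, hF⟩ := exists_le_maximal_subset (p := CountIndep head tail ψ)
    (subset_union_left (s₂ := F₂)) hF₁
  obtain ⟨T, hF₁T, hT⟩ := exists_le_maximal_subset (p := IsTight head tail) hF₁F hF₁c
  have hFT : F ⊆ T ∪ F₂ := hF.1.1.trans (union_subset_union_left hF₁T)
  have hends : ∀ e ∈ F₂, e ∉ F → head e ∈ labVerts head tail T ∧ tail e ∈ labVerts head tail T :=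
    fun e he heF => endpoints_mem_labVerts_of_maximal hF.1.2 hT hF₂ hbal hFT he heF fun hins =>
      hF.not_prop_of_gt (ssubset_insert heF) ⟨insert_subset (mem_union_right _ he) hF.1.1, hins⟩
  have hVT : labVerts head tail E₁ ⊆ labVerts head tail T := hV₁ ▸ labVerts_mono hF₁T
  have hcount := two_mul_card_labVerts_union_le hT.1.2 hT.1.1 hFT hF₂ hbal hF₂c
    (hshare.trans (card_le_card (hV₂ ▸ inter_subset_inter_right hVT))) hends
  refine le_antisymm (rank2_le _) ?_
  calc 2 * (labVerts head tail (E₁ ∪ E₂)).card - 2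
      ≤ 2 * (labVerts head tail T ∪ labVerts head tail F₂).card - 2 := by
        rw [labVerts_union, ← hV₂]
        gcongr
    _ ≤ F.card := by omega
    _ ≤ rank2 head tail ψ (E₁ ∪ E₂) :=
        hF.1.2.card_le_rank2 (hF.1.1.trans (union_subset_union hF₁E hF₂E))
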